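/- Let M be a transition matrix on a finite nonempty type σ. Then for every t ≥ 0, all entries of Matrix.exp ℝ (t • M) are nonnegative; in particular, for every probability vector P₀ and t ≥ 0, every entry of (Matrix.exp ℝ (t • M)).mulVec P₀ lies in the interval [0, 1]. -/

import Mathlib

/-!
If `A` has nonnegative off-diagonal entries then `A + c • 1` is entrywise nonnegative for large
`c`, so `exp A = exp (-c) • exp (A + c • 1)` is entrywise nonnegative by the power series.
Zero column sums say `J * A = 0` for the all-ones matrix `J`, which kills every term of
`J * exp A` but the first; hence `exp (t • M)` is column-stochastic, and a column-stochastic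
matrix maps probability vectors to vectors with entries in `[0, 1]`.
-/

-- The analytic lemmas on `exp` need some normed algebra structure on matrices; any one will do.
attribute [local instance] Matrix.linftyOpNormedRing Matrix.linftyOpNormedAlgebra

open NormedSpace
open scoped Nat

theorem mul_exp_eq_self_of_mul_eq_zero {𝔸 : Type*} [NormedRing 𝔸] [NormedAlgebra ℚ 𝔸]
    [CompleteSpace 𝔸] {x a : 𝔸} (h : x * a = 0) : x * exp a = x := by
  have hvanish : ∀ n ≠ 0, x * ((n ! : ℚ)⁻¹ • a ^ n) = 0 := fun n hn => by
    obtain ⟨m, rfl⟩ := Nat.exists_eq_add_one_of_ne_zero hn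
    rw [mul_smul_comm, pow_succ', ← mul_assoc, h, zero_mul, smul_zero]
  simpa using ((exp_series_hasSum_exp' (𝕂 := ℚ) a).mul_left x).unique (hasSum_single 0 hvanish)

namespace Matrix

variable {n : Type*} [Fintype n]

theorem mulVec_apply_mem_Icc {E : Matrix n n ℝ} (hE : ∀ i j, 0 ≤ E i j)
    (hcol : ∀ j, ∑ i, E i j = 1) {p : n → ℝ} (hp : ∀ i, 0 ≤ p i) (hp1 : ∑ i, p i = 1) (i : n) :
    (E *ᵥ p) i ∈ Set.Icc 0 1 := by
  have hle : ∀ j, E i j ≤ 1 := fun j =>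
    hcol j ▸ Finset.single_le_sum (fun k _ => hE k j) (Finset.mem_univ i)
  refine ⟨Finset.sum_nonneg fun j _ => mul_nonneg (hE i j) (hp j), ?_⟩
  calc (E *ᵥ p) i = ∑ j, E i j * p j := rfl
    _ ≤ ∑ j, p j := Finset.sum_le_sum fun j _ => mul_le_of_le_one_left (hp j) (hle j)
    _ = 1 := hp1

variable [DecidableEq n]

theorem exp_apply_nonneg {A : Matrix n n ℝ} (hA : ∀ i j, 0 ≤ A i j) (i j : n) :
    0 ≤ exp A i j := by
  have hsum := Pi.hasSum.mp (Pi.hasSum.mp (exp_series_hasSum_exp' (𝕂 := ℝ) A) i) j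
  refine hsum.nonneg fun k => ?_
  simpa only [smul_apply, smul_eq_mul] using
    mul_nonneg (by positivity) (pow_apply_nonneg hA k i j)

theorem exp_apply_nonneg_of_offDiag_nonneg {A : Matrix n n ℝ}
    (hA : ∀ i j, i ≠ j → 0 ≤ A i j) (i j : n) : 0 ≤ exp A i j := by
  obtain ⟨c, hc⟩ := (Set.finite_range fun k => -A k k).bddAbove
  have hshift : ∀ i j, 0 ≤ (A + c • 1) i j := fun i j => by
    by_cases hij : i = j
    · subst hij
      simpa using neg_le_iff_add_nonneg'.mp (hc ⟨i, rfl⟩)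
    · simpa [one_apply_ne hij] using hA i j hij
  have hsplit : exp A = Real.exp (-c) • exp (A + c • 1) := by
    calc exp A = exp (algebraMap ℝ _ (-c) + (A + c • 1)) := by
          rw [Algebra.algebraMap_eq_smul_one]; congr 1; module
      _ = algebraMap ℝ _ (Real.exp (-c)) * exp (A + c • 1) := by
          rw [Matrix.exp_add_of_commute _ _ (Algebra.commute_algebraMap_left _ _),
            Real.exp_eq_exp_ℝ, algebraMap_exp_comm]
          rfl
      _ = Real.exp (-c) • exp (A + c • 1) := (Algebra.smul_def _ _).symm
  rw [hsplit]
  exact mul_nonneg (Real.exp_pos _).le (exp_apply_nonneg hshift i j)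

theorem sum_exp_apply_eq_one {A : Matrix n n ℝ} (hA : ∀ j, ∑ i, A i j = 0) (j : n) :
    ∑ i, exp A i j = 1 := by
  let J : Matrix n n ℝ := of fun _ _ => 1
  have hJA : J * A = 0 := by
    ext i j
    simp [J, mul_apply, hA]
  have hJ := ext_iff.mpr (mul_exp_eq_self_of_mul_eq_zero hJA) j j
  simp only [J, mul_apply, of_apply, one_mul] at hJ
  exact hJ

end Matrix

theorem exp_entries_nonneg_and_solution_mem_Icc_general
    {σ : Type*} [Fintype σ] [DecidableEq σ]
    (M : Matrix σ σ ℝ)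
    (hMoff : ∀ i j : σ, i ≠ j → 0 ≤ M i j)
    (hMcol : ∀ j : σ, ∑ i, M i j = 0) :
    (∀ t : ℝ, 0 ≤ t → ∀ i j : σ, 0 ≤ (NormedSpace.exp (t • M)) i j) ∧
    (∀ P₀ : σ → ℝ, (∀ i, 0 ≤ P₀ i) → (∑ i, P₀ i = 1) →
      ∀ t : ℝ, 0 ≤ t → ∀ i : σ,
        ((NormedSpace.exp (t • M)).mulVec P₀) i ∈ Set.Icc (0 : ℝ) 1) := by
  have hnonneg : ∀ t : ℝ, 0 ≤ t → ∀ i j, 0 ≤ exp (t • M) i j := fun t ht =>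
    Matrix.exp_apply_nonneg_of_offDiag_nonneg fun i j hij => mul_nonneg ht (hMoff i j hij)
  have hcol : ∀ t : ℝ, ∀ j, ∑ i, (t • M) i j = 0 := fun t j => by
    simp [← Finset.mul_sum, hMcol]
  exact ⟨hnonneg, fun P₀ hP₀ hP₀1 t ht =>
    Matrix.mulVec_apply_mem_Icc (hnonneg t ht) (Matrix.sum_exp_apply_eq_one (hcol t)) hP₀ hP₀1⟩

/-- For a transition matrix `M` and `t ≥ 0`, all entries of `exp(t M)` are
nonnegative; in particular every entry of `exp(t M) P₀` lies in `[0, 1]` for every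
probability vector `P₀`.
(In this Mathlib version the matrix exponential `Matrix.exp ℝ` is `NormedSpace.exp ℝ`.) -/
theorem exp_entries_nonneg_and_solution_mem_Icc
    {σ : Type*} [Fintype σ] [Nonempty σ] [DecidableEq σ]
    (M : Matrix σ σ ℝ)
    (hMoff : ∀ i j : σ, i ≠ j → 0 ≤ M i j)
    (hMcol : ∀ j : σ, ∑ i, M i j = 0) :
    (∀ t : ℝ, 0 ≤ t → ∀ i j : σ, 0 ≤ (NormedSpace.exp (t • M)) i j) ∧
    (∀ P₀ : σ → ℝ, (∀ i, 0 ≤ P₀ i) → (∑ i, P₀ i = 1) →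
      ∀ t : ℝ, 0 ≤ t → ∀ i : σ,
        ((NormedSpace.exp (t • M)).mulVec P₀) i ∈ Set.Icc (0 : ℝ) 1) :=
  exp_entries_nonneg_and_solution_mem_Icc_general M hMoff hMcol
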